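/- arXiv:1510.04984 — 2 statements merged into one kernel-verified Lean document; each statement's English description precedes it below -/
import Mathlib

section
/- A real square matrix L with zero column sums (𝟙ᵀL = 0), nonnegative diagonal entries and nonpositive off-diagonal entries satisfies xᵀ(L + Lᵀ)x ≥ 0 for all x if and only if L is balanced, i.e., L𝟙 = 0 as well. -/
open Matrix Finset

/-!
With zero row and column sums, `xᵀ L x = -½ ∑ᵢⱼ Lᵢⱼ (xᵢ - xⱼ)²`, which is nonnegative when the
off-diagonal entries are nonpositive. Conversely, `M = L + Lᵀ` satisfies `𝟙ᵀ M 𝟙 = 2 · (𝟙ᵀ L) 𝟙 = 0`;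
if `M` is positive semidefinite this forces `M 𝟙 = 0`, and `M 𝟙 = L 𝟙` because `Lᵀ 𝟙 = 0`.
-/

namespace Matrix

variable {ι R : Type*} [Fintype ι]

theorem dotProduct_add_transpose_mulVec_self [CommSemiring R] (L : Matrix ι ι R) (x : ι → R) :
    x ⬝ᵥ ((L + Lᵀ) *ᵥ x) = 2 * (x ⬝ᵥ (L *ᵥ x)) := by
  rw [add_mulVec, dotProduct_add, mulVec_transpose, dotProduct_comm x (x ᵥ* L),
    ← dotProduct_mulVec, two_mul]

theorem two_mul_dotProduct_mulVec_self_eq_neg_sum [CommRing R] {L : Matrix ι ι R}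
    (hrow : L *ᵥ 1 = 0) (hcol : 1 ᵥ* L = 0) (x : ι → R) :
    2 * (x ⬝ᵥ (L *ᵥ x)) = -∑ i, ∑ j, L i j * (x i - x j) ^ 2 := by
  have hrowSum : ∀ i, ∑ j, L i j = 0 := fun i => by
    simpa [mulVec, dotProduct] using congrFun hrow i
  have hcolSum : ∀ j, ∑ i, L i j = 0 := fun j => by
    simpa [vecMul, dotProduct] using congrFun hcol j
  have hexp : ∀ i j, L i j * (x i - x j) ^ 2
      = L i j * x i ^ 2 + L i j * x j ^ 2 - 2 * (x i * (L i j * x j)) := fun i j => by ring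
  have hrowTerms : ∑ i, ∑ j, L i j * x i ^ 2 = 0 := by
    simp only [← sum_mul, hrowSum, zero_mul, sum_const_zero]
  have hcolTerms : ∑ i, ∑ j, L i j * x j ^ 2 = 0 := by
    rw [sum_comm]
    simp only [← sum_mul, hcolSum, zero_mul, sum_const_zero]
  simp only [hexp, sum_sub_distrib, sum_add_distrib, ← mul_sum, hrowTerms, hcolTerms]
  simp only [dotProduct, mulVec]
  ring

theorem neg_sum_mul_sq_sub_nonneg [CommRing R] [LinearOrder R] [IsOrderedRing R]
    {L : Matrix ι ι R} (hoff : ∀ i j, i ≠ j → L i j ≤ 0) (x : ι → R) :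
    0 ≤ -∑ i, ∑ j, L i j * (x i - x j) ^ 2 := by
  rw [neg_nonneg]
  refine sum_nonpos fun i _ => sum_nonpos fun j _ => ?_
  rcases eq_or_ne i j with rfl | hij
  · simp
  · exact mul_nonpos_of_nonpos_of_nonneg (hoff i j hij) (sq_nonneg _)

theorem dotProduct_add_transpose_mulVec_nonneg [CommRing R] [LinearOrder R] [IsOrderedRing R]
    {L : Matrix ι ι R} (hrow : L *ᵥ 1 = 0) (hcol : 1 ᵥ* L = 0)
    (hoff : ∀ i j, i ≠ j → L i j ≤ 0) (x : ι → R) :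
    0 ≤ x ⬝ᵥ ((L + Lᵀ) *ᵥ x) := by
  rw [dotProduct_add_transpose_mulVec_self, two_mul_dotProduct_mulVec_self_eq_neg_sum hrow hcol]
  exact neg_sum_mul_sq_sub_nonneg hoff x

theorem mulVec_one_eq_zero_of_dotProduct_add_transpose_mulVec_nonneg {L : Matrix ι ι ℝ}
    (hcol : 1 ᵥ* L = 0) (hpsd : ∀ x, 0 ≤ x ⬝ᵥ ((L + Lᵀ) *ᵥ x)) :
    L *ᵥ 1 = 0 := by
  have hM : (L + Lᵀ).PosSemidef := .of_dotProduct_mulVec_nonneg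
    (by simp [IsHermitian, conjTranspose_eq_transpose_of_trivial, add_comm]) (by simpa using hpsd)
  have hquad : star (1 : ι → ℝ) ⬝ᵥ ((L + Lᵀ) *ᵥ 1) = 0 := by
    rw [star_trivial, dotProduct_add_transpose_mulVec_self, dotProduct_mulVec, hcol,
      zero_dotProduct, mul_zero]
  have hker := (hM.dotProduct_mulVec_zero_iff 1).mp hquad
  rwa [add_mulVec, mulVec_transpose, hcol, add_zero] at hker

end Matrix

theorem flowLaplacian_posSemidef_iff_balanced_general {n : ℕ} (L : Matrix (Fin n) (Fin n) ℝ)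
    (hcol : (1 : Fin n → ℝ) ᵥ* L = 0)
    (hoff : ∀ i j, i ≠ j → L i j ≤ 0) :
    (∀ x : Fin n → ℝ, 0 ≤ x ⬝ᵥ ((L + Lᵀ) *ᵥ x)) ↔ L *ᵥ (1 : Fin n → ℝ) = 0 :=
  ⟨mulVec_one_eq_zero_of_dotProduct_add_transpose_mulVec_nonneg hcol,
    fun hrow => dotProduct_add_transpose_mulVec_nonneg hrow hcol hoff⟩

/-- A real square matrix `L` with zero column sums, nonnegative diagonal
entries and nonpositive off-diagonal entries satisfies `xᵀ(L + Lᵀ)x ≥ 0` for all `x`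
if and only if `L` is balanced, i.e. `L 𝟙 = 0` as well. -/
theorem flowLaplacian_posSemidef_iff_balanced {n : ℕ} (L : Matrix (Fin n) (Fin n) ℝ)
    (hcol : (1 : Fin n → ℝ) ᵥ* L = 0)
    (hdiag : ∀ i, 0 ≤ L i i)
    (hoff : ∀ i j, i ≠ j → L i j ≤ 0) :
    (∀ x : Fin n → ℝ, 0 ≤ x ⬝ᵥ ((L + Lᵀ) *ᵥ x)) ↔ L *ᵥ (1 : Fin n → ℝ) = 0 :=
  flowLaplacian_posSemidef_iff_balanced_general L hcol hoff
end

section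
/- If each of N systems is passive with storage Sᵢ, L is a flow-Laplacian with Lσ = 0 for positive σ, and u = −Ly + v, then the weighted storage S^σ = Σᵢ (1/σᵢ)Sᵢ satisfies dS^σ/dt ≤ yᵀΣ⁻¹v, where Σ = diag(σ). -/
/-!
Passivity of each subsystem bounds the derivative of the weighted storage by the weighted
supply `∑ᵢ yᵢuᵢ/σᵢ = zᵀv − zᵀ(LΣ)z` with `z = Σ⁻¹y`. The matrix `LΣ` is balanced: its row sums
vanish because `Lσ = 0`, its column sums because `𝟙ᵀL = 0`, and its off-diagonal entries are
nonpositive. For a balanced matrix `B`, `2 zᵀBz = ∑ᵢⱼ (−Bᵢⱼ)(zᵢ − zⱼ)² ≥ 0`, so the coupling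
term only dissipates.
-/

open Matrix Finset

section Balanced

variable {ι R : Type*} [Fintype ι] [CommRing R] {B : Matrix ι ι R}

theorem sum_neg_mul_sq_sub_eq_two_mul_dotProduct_mulVec (hrow : B *ᵥ 1 = 0)
    (hcol : 1 ᵥ* B = 0) (z : ι → R) :
    ∑ i, ∑ j, -B i j * (z i - z j) ^ 2 = 2 * (z ⬝ᵥ (B *ᵥ z)) := by
  have hrow' (i : ι) : ∑ j, B i j = 0 := by simpa [mulVec, dotProduct] using congrFun hrow i
  have hcol' (j : ι) : ∑ i, B i j = 0 := by simpa [vecMul, dotProduct] using congrFun hcol j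
  have hsq (i j : ι) : -B i j * (z i - z j) ^ 2
      = 2 * (z i * (B i j * z j)) - z i ^ 2 * B i j - z j ^ 2 * B i j := by ring
  have hsq_row : ∑ i, ∑ j, z i ^ 2 * B i j = 0 := by
    simp only [← mul_sum, hrow', mul_zero, sum_const_zero]
  have hsq_col : ∑ i, ∑ j, z j ^ 2 * B i j = 0 := by
    rw [sum_comm]
    simp only [← mul_sum, hcol', mul_zero, sum_const_zero]
  simp only [hsq, sum_sub_distrib]
  rw [hsq_row, hsq_col, sub_zero, sub_zero]
  simp only [← mul_sum]
  rfl

variable [LinearOrder R] [IsStrictOrderedRing R]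

theorem dotProduct_mulVec_nonneg_of_balanced (hrow : B *ᵥ 1 = 0) (hcol : 1 ᵥ* B = 0)
    (hoff : ∀ i j, i ≠ j → B i j ≤ 0) (z : ι → R) : 0 ≤ z ⬝ᵥ (B *ᵥ z) := by
  have hterm (i j : ι) : 0 ≤ -B i j * (z i - z j) ^ 2 := by
    rcases eq_or_ne i j with rfl | hij
    · simp
    · exact mul_nonneg (neg_nonneg.mpr (hoff i j hij)) (sq_nonneg _)
  have hsum : 0 ≤ ∑ i, ∑ j, -B i j * (z i - z j) ^ 2 :=
    sum_nonneg fun i _ ↦ sum_nonneg fun j _ ↦ hterm i j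
  rw [sum_neg_mul_sq_sub_eq_two_mul_dotProduct_mulVec hrow hcol] at hsum
  linarith

end Balanced

section Weighted

variable {ι K : Type*} [Fintype ι] [DecidableEq ι] [Field K]

theorem dotProduct_inv_diagonal_mulVec {σ : ι → K} (hσ : ∀ i, σ i ≠ 0) (y v : ι → K) :
    y ⬝ᵥ ((diagonal σ)⁻¹ *ᵥ v) = (y / σ) ⬝ᵥ v := by
  have hinv : (diagonal σ)⁻¹ = diagonal σ⁻¹ := by
    refine inv_eq_left_inv ?_
    rw [diagonal_mul_diagonal, ← diagonal_one]
    exact congrArg diagonal (funext fun i ↦ inv_mul_cancel₀ (hσ i))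
  rw [hinv]
  simp only [dotProduct, mulVec_diagonal, Pi.inv_apply, Pi.div_apply]
  exact sum_congr rfl fun i _ ↦ by ring

variable [LinearOrder K] [IsStrictOrderedRing K] {L : Matrix ι ι K} {σ : ι → K}

theorem dotProduct_div_mulVec_nonneg (hcol : 1 ᵥ* L = 0) (hoff : ∀ i j, i ≠ j → L i j ≤ 0)
    (hσ : ∀ i, 0 < σ i) (hker : L *ᵥ σ = 0) (y : ι → K) :
    0 ≤ (y / σ) ⬝ᵥ (L *ᵥ y) := by
  have hrow : (L * diagonal σ) *ᵥ 1 = 0 := by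
    rw [← mulVec_mulVec, ← hker]
    congr 1
    ext i
    simp [mulVec_diagonal]
  have hcol' : 1 ᵥ* (L * diagonal σ) = 0 := by
    rw [← vecMul_vecMul, hcol, zero_vecMul]
  have hoff' (i j : ι) (hij : i ≠ j) : (L * diagonal σ) i j ≤ 0 := by
    rw [mul_diagonal]
    exact mul_nonpos_of_nonpos_of_nonneg (hoff i j hij) (hσ j).le
  have hy : (L * diagonal σ) *ᵥ (y / σ) = L *ᵥ y := by
    rw [← mulVec_mulVec]
    congr 1
    ext i
    simp [mulVec_diagonal, mul_div_cancel₀ _ (hσ i).ne']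
  simpa [hy] using dotProduct_mulVec_nonneg_of_balanced hrow hcol' hoff' (y / σ)

end Weighted

theorem deriv_sum_const_mul_le {ι : Type*} [Fintype ι] {S : ι → ℝ → ℝ} {t : ℝ}
    (hS : ∀ i, DifferentiableAt ℝ (S i) t) {w p : ι → ℝ} (hw : ∀ i, 0 ≤ w i)
    (hp : ∀ i, deriv (S i) t ≤ p i) :
    deriv (fun s ↦ ∑ i, w i * S i s) t ≤ w ⬝ᵥ p := by
  rw [deriv_fun_sum fun i _ ↦ (hS i).const_mul (w i)]
  simp only [deriv_const_mul_field']
  exact sum_le_sum fun i _ ↦ mul_le_mul_of_nonneg_left (hp i) (hw i)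

theorem weighted_interconnection_passive_general {N : ℕ} (L : Matrix (Fin N) (Fin N) ℝ)
    (hcol : (1 : Fin N → ℝ) ᵥ* L = 0)
    (hoff : ∀ i j, i ≠ j → L i j ≤ 0)
    (σ : Fin N → ℝ) (hσ : ∀ i, 0 < σ i) (hker : L *ᵥ σ = 0)
    (S : Fin N → ℝ → ℝ) (y u v : ℝ → Fin N → ℝ)
    (hSdiff : ∀ i, Differentiable ℝ (S i))
    (hpassive : ∀ i t, deriv (S i) t ≤ y t i * u t i)
    (hinter : ∀ t, u t = -(L *ᵥ y t) + v t) :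
    ∀ t, deriv (fun s => ∑ i, (1 / σ i) * S i s) t ≤
      y t ⬝ᵥ ((Matrix.diagonal σ)⁻¹ *ᵥ v t) := by
  intro t
  have hsupply : (fun i ↦ 1 / σ i) ⬝ᵥ (y t * u t)
      = (y t / σ) ⬝ᵥ v t - (y t / σ) ⬝ᵥ (L *ᵥ y t) := by
    simp only [hinter t, dotProduct, ← sum_sub_distrib, Pi.mul_apply, Pi.div_apply,
      Pi.add_apply, Pi.neg_apply]
    exact sum_congr rfl fun i _ ↦ by ring
  calc deriv (fun s => ∑ i, (1 / σ i) * S i s) t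
      ≤ (fun i ↦ 1 / σ i) ⬝ᵥ (y t * u t) :=
        deriv_sum_const_mul_le (fun i ↦ (hSdiff i).differentiableAt)
          (fun i ↦ (one_div_pos.mpr (hσ i)).le) (hpassive · t)
    _ ≤ (y t / σ) ⬝ᵥ v t :=
        hsupply ▸ sub_le_self _ (dotProduct_div_mulVec_nonneg hcol hoff hσ hker (y t))
    _ = y t ⬝ᵥ ((diagonal σ)⁻¹ *ᵥ v t) :=
        (dotProduct_inv_diagonal_mulVec (fun i ↦ (hσ i).ne') (y t) (v t)).symm

/-- If each of `N` systems is passive with storage `Sᵢ`, `L` is a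
flow-Laplacian with `L σ = 0` for positive `σ`, and `u = −L y + v`, then the weighted
storage `S^σ = Σᵢ (1/σᵢ) Sᵢ` satisfies `dS^σ/dt ≤ yᵀ Σ⁻¹ v`, where `Σ = diag σ`. -/
theorem weighted_interconnection_passive {N : ℕ} (L : Matrix (Fin N) (Fin N) ℝ)
    (hcol : (1 : Fin N → ℝ) ᵥ* L = 0)
    (hoff : ∀ i j, i ≠ j → L i j ≤ 0)
    (σ : Fin N → ℝ) (hσ : ∀ i, 0 < σ i) (hker : L *ᵥ σ = 0)
    (S : Fin N → ℝ → ℝ) (y u v : ℝ → Fin N → ℝ)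
    (hSpos : ∀ i t, 0 ≤ S i t)
    (hSdiff : ∀ i, Differentiable ℝ (S i))
    (hpassive : ∀ i t, deriv (S i) t ≤ y t i * u t i)
    (hinter : ∀ t, u t = -(L *ᵥ y t) + v t) :
    ∀ t, deriv (fun s => ∑ i, (1 / σ i) * S i s) t ≤
      y t ⬝ᵥ ((Matrix.diagonal σ)⁻¹ *ᵥ v t) :=
  weighted_interconnection_passive_general L hcol hoff σ hσ hker S y u v hSdiff hpassive hinter
end
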